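/- arXiv:1306.0847 — 2 statements merged into one kernel-verified Lean document; each statement's English description precedes it below -/
import Mathlib

section
/- For smooth u : ℝ² → ℝ with xu_x + yu_y ≠ 0 on a domain, the quantity I = (u_x² u_yy − 2 u_x u_y u_xy + u_y² u_xx)/(x u_x + y u_y)² is invariant under the prolonged linear SL(2) action: if (x̃,ỹ)ᵀ = A(x,y)ᵀ with A ∈ SL(2,ℝ) and ũ(x̃,ỹ) = u(x,y), then I computed from ũ at (x̃,ỹ) equals I computed from u at (x,y). -/
/-- First partial derivative of `f : ℝ × ℝ → ℝ` in the first variable. -/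
noncomputable def pd1 (f : ℝ × ℝ → ℝ) (p : ℝ × ℝ) : ℝ := fderiv ℝ f p (1, 0)

/-- First partial derivative of `f : ℝ × ℝ → ℝ` in the second variable. -/
noncomputable def pd2 (f : ℝ × ℝ → ℝ) (p : ℝ × ℝ) : ℝ := fderiv ℝ f p (0, 1)

open ContinuousLinearMap in
/-- The inverse linear map of the SL(2) action, as a continuous linear map. -/
noncomputable def Gmap (a b c d : ℝ) : ℝ × ℝ →L[ℝ] ℝ × ℝ :=
  ((d • fst ℝ ℝ ℝ) + ((-b) • snd ℝ ℝ ℝ)).prod (((-c) • fst ℝ ℝ ℝ) + (a • snd ℝ ℝ ℝ))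

lemma Gmap_apply (a b c d : ℝ) (q : ℝ × ℝ) :
    Gmap a b c d q = (d * q.1 + -b * q.2, -c * q.1 + a * q.2) := by
  simp [Gmap, Prod.ext_iff]

lemma fderiv_comp_clm {v : ℝ × ℝ → ℝ} (hv : Differentiable ℝ v)
    (G : ℝ × ℝ →L[ℝ] ℝ × ℝ) (p w : ℝ × ℝ) :
    fderiv ℝ (fun q => v (G q)) p w = fderiv ℝ v (G p) (G w) := by
  have h1 : fderiv ℝ (v ∘ G) p = (fderiv ℝ v (G p)).comp (fderiv ℝ (⇑G) p) :=
    fderiv_comp p (hv _) G.differentiableAt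
  rw [G.fderiv] at h1
  have h2 : (fun q => v (G q)) = v ∘ G := rfl
  rw [h2, h1]; rfl

lemma fderiv_eval (v : ℝ × ℝ → ℝ) (q : ℝ × ℝ) (s t : ℝ) :
    fderiv ℝ v q (s, t) = s * pd1 v q + t * pd2 v q := by
  have h1 : ((s, t) : ℝ × ℝ) = s • ((1:ℝ), (0:ℝ)) + t • ((0:ℝ), (1:ℝ)) := by
    simp [Prod.ext_iff]
  rw [h1, map_add, map_smul, map_smul]
  simp [pd1, pd2, smul_eq_mul]

lemma pd1_comp {v : ℝ × ℝ → ℝ} (hv : Differentiable ℝ v) (a b c d : ℝ) (p : ℝ × ℝ) :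
    pd1 (fun q => v (Gmap a b c d q)) p
      = d * pd1 v (Gmap a b c d p) + -c * pd2 v (Gmap a b c d p) := by
  unfold pd1
  rw [fderiv_comp_clm hv]
  rw [show Gmap a b c d (1, 0) = ((d : ℝ), -c) by rw [Gmap_apply]; norm_num]
  rw [fderiv_eval]
  rfl

lemma pd2_comp {v : ℝ × ℝ → ℝ} (hv : Differentiable ℝ v) (a b c d : ℝ) (p : ℝ × ℝ) :
    pd2 (fun q => v (Gmap a b c d q)) p
      = -b * pd1 v (Gmap a b c d p) + a * pd2 v (Gmap a b c d p) := by
  unfold pd2 pd1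
  rw [fderiv_comp_clm hv]
  rw [show Gmap a b c d (0, 1) = ((-b : ℝ), a) by rw [Gmap_apply]; norm_num]
  rw [fderiv_eval]
  rfl

lemma fderiv_lin {f g : ℝ × ℝ → ℝ} {p : ℝ × ℝ} (hf : DifferentiableAt ℝ f p)
    (hg : DifferentiableAt ℝ g p) (α β : ℝ) (w : ℝ × ℝ) :
    fderiv ℝ (fun q => α * f q + β * g q) p w
      = α * fderiv ℝ f p w + β * fderiv ℝ g p w := by
  rw [fderiv_fun_add (hf.const_mul α) (hg.const_mul β), fderiv_const_mul hf, fderiv_const_mul hg]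
  simp

lemma contDiff_pd1 {u : ℝ × ℝ → ℝ} (hu : ContDiff ℝ (⊤ : ℕ∞) u) : ContDiff ℝ (⊤ : ℕ∞) (pd1 u) := by
  have h1 : ContDiff ℝ (⊤ : ℕ∞) (fderiv ℝ u) := hu.fderiv_right (by simp)
  exact h1.clm_apply contDiff_const

lemma contDiff_pd2 {u : ℝ × ℝ → ℝ} (hu : ContDiff ℝ (⊤ : ℕ∞) u) : ContDiff ℝ (⊤ : ℕ∞) (pd2 u) := by
  have h1 : ContDiff ℝ (⊤ : ℕ∞) (fderiv ℝ u) := hu.fderiv_right (by simp)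
  exact h1.clm_apply contDiff_const

lemma pd_eval_snd (u : ℝ × ℝ → ℝ) (hu : ContDiff ℝ (⊤ : ℕ∞) u) (q v w : ℝ × ℝ) :
    fderiv ℝ (fun p => fderiv ℝ u p v) q w = fderiv ℝ (fderiv ℝ u) q w v := by
  have hd : DifferentiableAt ℝ (fderiv ℝ u) q :=
    ((hu.fderiv_right (m := (⊤ : ℕ∞)) (by simp)).differentiable (by simp)) q
  rw [fderiv_clm_apply hd (differentiableAt_const v)]
  simp

lemma pd_symm {u : ℝ × ℝ → ℝ} (hu : ContDiff ℝ (⊤ : ℕ∞) u) (q : ℝ × ℝ) :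
    pd1 (pd2 u) q = pd2 (pd1 u) q := by
  have hd : DifferentiableAt ℝ (fderiv ℝ u) q :=
    ((hu.fderiv_right (m := (⊤ : ℕ∞)) (by simp)).differentiable (by simp)) q
  have hsymm := second_derivative_symmetric
    (f := u) (f' := fderiv ℝ u) (f'' := fderiv ℝ (fderiv ℝ u) q) (x := q)
    (fun z => ((hu.differentiable (by simp)) z).hasFDerivAt) hd.hasFDerivAt
  unfold pd1 pd2
  rw [pd_eval_snd u hu, pd_eval_snd u hu]
  exact hsymm _ _


lemma pd1_lin {f g : ℝ × ℝ → ℝ} {p : ℝ × ℝ} (hf : DifferentiableAt ℝ f p)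
    (hg : DifferentiableAt ℝ g p) (α β : ℝ) :
    pd1 (fun q => α * f q + β * g q) p = α * pd1 f p + β * pd1 g p :=
  fderiv_lin hf hg α β _

lemma pd2_lin {f g : ℝ × ℝ → ℝ} {p : ℝ × ℝ} (hf : DifferentiableAt ℝ f p)
    (hg : DifferentiableAt ℝ g p) (α β : ℝ) :
    pd2 (fun q => α * f q + β * g q) p = α * pd2 f p + β * pd2 g p :=
  fderiv_lin hf hg α β _

/-- The quantity `I = (u_x² u_yy − 2 u_x u_y u_xy + u_y² u_xx)/(x u_x + y u_y)²` is invariant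
under the prolonged standard linear SL(2,ℝ) action `(x̃,ỹ)ᵀ = A(x,y)ᵀ`, `ũ(x̃,ỹ) = u(x,y)`. -/
theorem I_invariant (a b c d : ℝ) (h : a*d - b*c = 1) (u ut : ℝ × ℝ → ℝ)
    (hu : ContDiff ℝ (⊤ : ℕ∞) u)
    (hcomp : ∀ x y : ℝ, ut (a*x + b*y, c*x + d*y) = u (x, y))
    (x y : ℝ) (hden : x * pd1 u (x, y) + y * pd2 u (x, y) ≠ 0) :
    ((pd1 ut (a*x + b*y, c*x + d*y))^2 * pd2 (pd2 ut) (a*x + b*y, c*x + d*y)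
        - 2 * pd1 ut (a*x + b*y, c*x + d*y) * pd2 ut (a*x + b*y, c*x + d*y)
            * pd2 (pd1 ut) (a*x + b*y, c*x + d*y)
        + (pd2 ut (a*x + b*y, c*x + d*y))^2 * pd1 (pd1 ut) (a*x + b*y, c*x + d*y))
      / ((a*x + b*y) * pd1 ut (a*x + b*y, c*x + d*y)
          + (c*x + d*y) * pd2 ut (a*x + b*y, c*x + d*y))^2
    = ((pd1 u (x, y))^2 * pd2 (pd2 u) (x, y)
        - 2 * pd1 u (x, y) * pd2 u (x, y) * pd2 (pd1 u) (x, y)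
        + (pd2 u (x, y))^2 * pd1 (pd1 u) (x, y))
      / (x * pd1 u (x, y) + y * pd2 u (x, y))^2 := by
  set G := Gmap a b c d with hGdef
  -- `ut` agrees everywhere with `u ∘ G`
  have hut : ut = fun q => u (G q) := by
    funext q
    have hq : ((a*(d*q.1 + -b*q.2) + b*(-c*q.1 + a*q.2),
        c*(d*q.1 + -b*q.2) + d*(-c*q.1 + a*q.2)) : ℝ × ℝ) = q := by
      rw [Prod.ext_iff]
      constructor
      · linear_combination q.1 * h
      · linear_combination q.2 * h
    calc ut q = ut (a*(d*q.1 + -b*q.2) + b*(-c*q.1 + a*q.2),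
          c*(d*q.1 + -b*q.2) + d*(-c*q.1 + a*q.2)) := by rw [hq]
      _ = u (d*q.1 + -b*q.2, -c*q.1 + a*q.2) := hcomp _ _
      _ = u (G q) := by rw [hGdef, Gmap_apply]
  have hG : G (a*x + b*y, c*x + d*y) = (x, y) := by
    rw [hGdef, Gmap_apply]
    rw [Prod.ext_iff]
    constructor
    · linear_combination x * h
    · linear_combination y * h
  have hud : Differentiable ℝ u := hu.differentiable (by simp)
  have hu1 : ContDiff ℝ (⊤ : ℕ∞) (pd1 u) := contDiff_pd1 hu
  have hu2 : ContDiff ℝ (⊤ : ℕ∞) (pd2 u) := contDiff_pd2 hu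
  have hu1d : Differentiable ℝ (pd1 u) := hu1.differentiable (by simp)
  have hu2d : Differentiable ℝ (pd2 u) := hu2.differentiable (by simp)
  set P : ℝ × ℝ := (a*x + b*y, c*x + d*y) with hP
  -- first derivatives of ut
  have h1 : pd1 ut P = d * pd1 u (x, y) + -c * pd2 u (x, y) := by
    rw [hut, pd1_comp hud, hG]
  have h2 : pd2 ut P = -b * pd1 u (x, y) + a * pd2 u (x, y) := by
    rw [hut, pd2_comp hud, hG]
  -- functional form of first derivatives of ut
  have h1f : pd1 ut = fun p => d * pd1 u (G p) + -c * pd2 u (G p) := by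
    funext p; rw [hut, pd1_comp hud]
  have h2f : pd2 ut = fun p => -b * pd1 u (G p) + a * pd2 u (G p) := by
    funext p; rw [hut, pd2_comp hud]
  -- differentiability of compositions
  have hdc1 : ∀ p : ℝ × ℝ, DifferentiableAt ℝ (fun q => pd1 u (G q)) p := fun p =>
    DifferentiableAt.comp p (hu1d (G p)) G.differentiableAt
  have hdc2 : ∀ p : ℝ × ℝ, DifferentiableAt ℝ (fun q => pd2 u (G q)) p := fun p =>
    DifferentiableAt.comp p (hu2d (G p)) G.differentiableAt
  -- second derivatives of ut
  have h11 : pd1 (pd1 ut) P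
      = d * (d * pd1 (pd1 u) (x, y) + -c * pd2 (pd1 u) (x, y))
        + -c * (d * pd1 (pd2 u) (x, y) + -c * pd2 (pd2 u) (x, y)) := by
    have key : pd1 (fun p => d * pd1 u (G p) + -c * pd2 u (G p)) P
        = d * pd1 (fun q => pd1 u (G q)) P + -c * pd1 (fun q => pd2 u (G q)) P :=
      pd1_lin (hdc1 P) (hdc2 P) d (-c)
    rw [h1f, key, pd1_comp hu1d, pd1_comp hu2d, hG]
  have h12 : pd2 (pd1 ut) P
      = d * (-b * pd1 (pd1 u) (x, y) + a * pd2 (pd1 u) (x, y))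
        + -c * (-b * pd1 (pd2 u) (x, y) + a * pd2 (pd2 u) (x, y)) := by
    have key : pd2 (fun p => d * pd1 u (G p) + -c * pd2 u (G p)) P
        = d * pd2 (fun q => pd1 u (G q)) P + -c * pd2 (fun q => pd2 u (G q)) P :=
      pd2_lin (hdc1 P) (hdc2 P) d (-c)
    rw [h1f, key, pd2_comp hu1d, pd2_comp hu2d, hG]
  have h22 : pd2 (pd2 ut) P
      = -b * (-b * pd1 (pd1 u) (x, y) + a * pd2 (pd1 u) (x, y))
        + a * (-b * pd1 (pd2 u) (x, y) + a * pd2 (pd2 u) (x, y)) := by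
    have key : pd2 (fun p => -b * pd1 u (G p) + a * pd2 u (G p)) P
        = -b * pd2 (fun q => pd1 u (G q)) P + a * pd2 (fun q => pd2 u (G q)) P :=
      pd2_lin (hdc1 P) (hdc2 P) (-b) a
    rw [h2f, key, pd2_comp hu1d, pd2_comp hu2d, hG]
  have hsym : pd1 (pd2 u) (x, y) = pd2 (pd1 u) (x, y) := pd_symm hu (x, y)
  rw [h1, h2, h11, h12, h22, hsym]
  have hdeneq : (a*x + b*y) * (d * pd1 u (x, y) + -c * pd2 u (x, y))
      + (c*x + d*y) * (-b * pd1 u (x, y) + a * pd2 u (x, y))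
      = x * pd1 u (x, y) + y * pd2 u (x, y) := by
    linear_combination (x * pd1 u (x, y) + y * pd2 u (x, y)) * h
  rw [hdeneq]
  congr 1
  linear_combination ((a*d - b*c + 1) *
    ((pd1 u (x, y))^2 * pd2 (pd2 u) (x, y)
      - 2 * pd1 u (x, y) * pd2 u (x, y) * pd2 (pd1 u) (x, y)
      + (pd2 u (x, y))^2 * pd1 (pd1 u) (x, y))) * h
end

section
/- The Euler–Lagrange equation of the one-dimensional variational problem ∫ (2u_xxx u_x − 3u_xx²)²/(4u_x⁷) dx, when written in terms of the invariant σ = u_xxx/u_x³ − (3/2)u_xx²/u_x⁴ and the invariant derivative 𝒟 = (1/u_x)(d/dx), is −2𝒟³σ + 6σ𝒟σ = 0. Equivalently: applying the classical Euler operator E_u to L̄ = σ²u_x yields u_x times (−2𝒟³σ + 6σ𝒟σ) evaluated on u, i.e. E_u(σ² u_x) = −u_x(2𝒟³σ − 6σ𝒟σ). -/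
set_option maxHeartbeats 1600000

/-- The differential invariant `σ = u'''/(u')³ − (3/2)(u'')²/(u')⁴`. -/
noncomputable def sigmaInv (u : ℝ → ℝ) (x : ℝ) : ℝ :=
  iteratedDeriv 3 u x / (deriv u x)^3 - (3/2) * (iteratedDeriv 2 u x)^2 / (deriv u x)^4

/-- The invariant differentiation operator `𝒟 f = f'/u'`. -/
noncomputable def invD (u f : ℝ → ℝ) (x : ℝ) : ℝ := deriv f x / deriv u x

lemma itd2eq (f : ℝ → ℝ) : iteratedDeriv 2 f = deriv (deriv f) := by
  rw [show (2:ℕ) = 1+1 from rfl, iteratedDeriv_succ, iteratedDeriv_one]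

lemma itd3eq (f : ℝ → ℝ) : iteratedDeriv 3 f = deriv (deriv (deriv f)) := by
  rw [show (3:ℕ) = 2+1 from rfl, iteratedDeriv_succ, itd2eq]

/-- The Euler–Lagrange equation of `∫ (2u‴u′ − 3u″²)²/(4u′⁷) dx = ∫ σ²u′ dx` in terms of the
invariants: `E_u(σ²u_x) = −u_x (2𝒟³σ − 6σ𝒟σ)`.  On the left, the Euler operator
`E_u = Σ_k (−1)^k (d/dx)^k ∂/∂u^{(k)}` is applied to `L̄ = (2u‴u′ − 3u″²)²/(4u′⁷)`, with the
partial derivatives of `L̄` with respect to the jet variables `u′,u″,u‴` written out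
explicitly and evaluated along `u`. -/
theorem euler_lagrange_invariant_form (u : ℝ → ℝ) (hu : ContDiff ℝ (⊤ : ℕ∞) u)
    (hux : ∀ x, deriv u x ≠ 0) (x : ℝ) :
    - deriv (fun y =>
        iteratedDeriv 3 u y * (2 * iteratedDeriv 3 u y * deriv u y
            - 3 * (iteratedDeriv 2 u y)^2) / (deriv u y)^7
          - (7/4) * (2 * iteratedDeriv 3 u y * deriv u y
            - 3 * (iteratedDeriv 2 u y)^2)^2 / (deriv u y)^8) x
      + iteratedDeriv 2 (fun y =>
          -3 * iteratedDeriv 2 u y * (2 * iteratedDeriv 3 u y * deriv u y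
            - 3 * (iteratedDeriv 2 u y)^2) / (deriv u y)^7) x
      - iteratedDeriv 3 (fun y =>
          (2 * iteratedDeriv 3 u y * deriv u y
            - 3 * (iteratedDeriv 2 u y)^2) / (deriv u y)^6) x
    = - deriv u x *
        (2 * invD u (invD u (invD u (sigmaInv u))) x
          - 6 * sigmaInv u x * invD u (sigmaInv u) x) := by
  have hdiff : ∀ n : ℕ, Differentiable ℝ (iteratedDeriv n u) := fun n =>
    hu.differentiable_iteratedDeriv n (by exact_mod_cast ENat.coe_lt_top n)
  have hd2 := hdiff 2
  have hd3 := hdiff 3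
  have hd4 := hdiff 4
  have hd5 := hdiff 5
  have hd6 := hdiff 6
  have hdu : Differentiable ℝ u := hu.differentiable (by simp)
  have hdu1 : Differentiable ℝ (deriv u) := by
    have := hdiff 1
    rwa [iteratedDeriv_one] at this
  have hD : ∀ (n : ℕ) (y : ℝ), deriv (iteratedDeriv n u) y = iteratedDeriv (n+1) u y :=
    fun n y => by rw [← iteratedDeriv_succ]
  have hD1 : ∀ y : ℝ, deriv (deriv u) y = iteratedDeriv 2 u y := fun y => by
    rw [itd2eq]
  have E11 : deriv (fun y =>
        iteratedDeriv 3 u y * (2 * iteratedDeriv 3 u y * deriv u y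
            - 3 * (iteratedDeriv 2 u y)^2) / (deriv u y)^7
          - (7/4) * (2 * iteratedDeriv 3 u y * deriv u y
            - 3 * (iteratedDeriv 2 u y)^2)^2 / (deriv u y)^8) = fun y => ((-10 : ℝ) * (deriv u y) ^ 3 * (iteratedDeriv 3 u y) * (iteratedDeriv 4 u y) + (66 : ℝ) * (deriv u y) ^ 2 * (iteratedDeriv 2 u y) * (iteratedDeriv 3 u y) ^ 2 + (18 : ℝ) * (deriv u y) ^ 2 * (iteratedDeriv 2 u y) ^ 2 * (iteratedDeriv 4 u y) + (-189 : ℝ) * (deriv u y) * (iteratedDeriv 2 u y) ^ 3 * (iteratedDeriv 3 u y) + (126 : ℝ) * (iteratedDeriv 2 u y) ^ 5) / deriv u y ^ 9 := by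
    funext y
    simp (disch := first | exact hux _ | exact pow_ne_zero _ (hux _) | (fun_prop (disch := first | exact hux _ | exact pow_ne_zero _ (hux _)))) only [deriv_fun_div, deriv_fun_mul, deriv_const_mul, deriv_fun_sub, deriv_fun_add, deriv_fun_pow, deriv_const', hD, hD1, Nat.reduceAdd, Nat.reduceSub]
    try field_simp [hux y]
    try ring1
    all_goals try field_simp [hux y]
    all_goals first
    | ring1
    | (left; ring1)
    | (right; ring1)
    | (rw [div_eq_iff (by simp [hux y])]; ring1)
    | simp
  have E21 : deriv (fun y =>
          -3 * iteratedDeriv 2 u y * (2 * iteratedDeriv 3 u y * deriv u y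
            - 3 * (iteratedDeriv 2 u y)^2) / (deriv u y)^7) = fun y => ((-6 : ℝ) * (deriv u y) ^ 2 * (iteratedDeriv 3 u y) ^ 2 + (-6 : ℝ) * (deriv u y) ^ 2 * (iteratedDeriv 2 u y) * (iteratedDeriv 4 u y) + (63 : ℝ) * (deriv u y) * (iteratedDeriv 2 u y) ^ 2 * (iteratedDeriv 3 u y) + (-63 : ℝ) * (iteratedDeriv 2 u y) ^ 4) / deriv u y ^ 8 := by
    funext y
    simp (disch := first | exact hux _ | exact pow_ne_zero _ (hux _) | (fun_prop (disch := first | exact hux _ | exact pow_ne_zero _ (hux _)))) only [deriv_fun_div, deriv_fun_mul, deriv_const_mul, deriv_fun_sub, deriv_fun_add, deriv_fun_pow, deriv_const', hD, hD1, Nat.reduceAdd, Nat.reduceSub]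
    try field_simp [hux y]
    try ring1
    all_goals try field_simp [hux y]
    all_goals first
    | ring1
    | (left; ring1)
    | (right; ring1)
    | (rw [div_eq_iff (by simp [hux y])]; ring1)
    | simp
  have E22 : deriv (fun y => ((-6 : ℝ) * (deriv u y) ^ 2 * (iteratedDeriv 3 u y) ^ 2 + (-6 : ℝ) * (deriv u y) ^ 2 * (iteratedDeriv 2 u y) * (iteratedDeriv 4 u y) + (63 : ℝ) * (deriv u y) * (iteratedDeriv 2 u y) ^ 2 * (iteratedDeriv 3 u y) + (-63 : ℝ) * (iteratedDeriv 2 u y) ^ 4) / deriv u y ^ 8) = fun y => ((-18 : ℝ) * (deriv u y) ^ 3 * (iteratedDeriv 3 u y) * (iteratedDeriv 4 u y) + (-6 : ℝ) * (deriv u y) ^ 3 * (iteratedDeriv 2 u y) * (iteratedDeriv 5 u y) + (162 : ℝ) * (deriv u y) ^ 2 * (iteratedDeriv 2 u y) * (iteratedDeriv 3 u y) ^ 2 + (99 : ℝ) * (deriv u y) ^ 2 * (iteratedDeriv 2 u y) ^ 2 * (iteratedDeriv 4 u y) + (-693 : ℝ) * (deriv u y) * (iteratedDeriv 2 u y) ^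 3 * (iteratedDeriv 3 u y) + (504 : ℝ) * (iteratedDeriv 2 u y) ^ 5) / deriv u y ^ 9 := by
    funext y
    simp (disch := first | exact hux _ | exact pow_ne_zero _ (hux _) | (fun_prop (disch := first | exact hux _ | exact pow_ne_zero _ (hux _)))) only [deriv_fun_div, deriv_fun_mul, deriv_const_mul, deriv_fun_sub, deriv_fun_add, deriv_fun_pow, deriv_const', hD, hD1, Nat.reduceAdd, Nat.reduceSub]
    try field_simp [hux y]
    try ring1
    all_goals try field_simp [hux y]
    all_goals first
    | ring1
    | (left; ring1)
    | (right; ring1)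
    | (rw [div_eq_iff (by simp [hux y])]; ring1)
    | simp
  have E31 : deriv (fun y =>
          (2 * iteratedDeriv 3 u y * deriv u y
            - 3 * (iteratedDeriv 2 u y)^2) / (deriv u y)^6) = fun y => ((2 : ℝ) * (deriv u y) ^ 2 * (iteratedDeriv 4 u y) + (-16 : ℝ) * (deriv u y) * (iteratedDeriv 2 u y) * (iteratedDeriv 3 u y) + (18 : ℝ) * (iteratedDeriv 2 u y) ^ 3) / deriv u y ^ 7 := by
    funext y
    simp (disch := first | exact hux _ | exact pow_ne_zero _ (hux _) | (fun_prop (disch := first | exact hux _ | exact pow_ne_zero _ (hux _)))) only [deriv_fun_div, deriv_fun_mul, deriv_const_mul, deriv_fun_sub, deriv_fun_add, deriv_fun_pow, deriv_const', hD, hD1, Nat.reduceAdd, Nat.reduceSub]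
    try field_simp [hux y]
    try ring1
    all_goals try field_simp [hux y]
    all_goals first
    | ring1
    | (left; ring1)
    | (right; ring1)
    | (rw [div_eq_iff (by simp [hux y])]; ring1)
    | simp
  have E32 : deriv (fun y => ((2 : ℝ) * (deriv u y) ^ 2 * (iteratedDeriv 4 u y) + (-16 : ℝ) * (deriv u y) * (iteratedDeriv 2 u y) * (iteratedDeriv 3 u y) + (18 : ℝ) * (iteratedDeriv 2 u y) ^ 3) / deriv u y ^ 7) = fun y => ((2 : ℝ) * (deriv u y) ^ 3 * (iteratedDeriv 5 u y) + (-16 : ℝ) * (deriv u y) ^ 2 * (iteratedDeriv 3 u y) ^ 2 + (-26 : ℝ) * (deriv u y) ^ 2 * (iteratedDeriv 2 u y) * (iteratedDeriv 4 u y) + (150 : ℝ) * (deriv u y) * (iteratedDeriv 2 u y) ^ 2 * (iteratedDeriv 3 u y) + (-126 : ℝ) * (iteratedDeriv 2 u y) ^ 4) / deriv u y ^ 8 := by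
    funext y
    simp (disch := first | exact hux _ | exact pow_ne_zero _ (hux _) | (fun_prop (disch := first | exact hux _ | exact pow_ne_zero _ (hux _)))) only [deriv_fun_div, deriv_fun_mul, deriv_const_mul, deriv_fun_sub, deriv_fun_add, deriv_fun_pow, deriv_const', hD, hD1, Nat.reduceAdd, Nat.reduceSub]
    try field_simp [hux y]
    try ring1
    all_goals try field_simp [hux y]
    all_goals first
    | ring1
    | (left; ring1)
    | (right; ring1)
    | (rw [div_eq_iff (by simp [hux y])]; ring1)
    | simp
  have E33 : deriv (fun y => ((2 : ℝ) * (deriv u y) ^ 3 * (iteratedDeriv 5 u y) + (-16 : ℝ) * (deriv u y) ^ 2 * (iteratedDeriv 3 u y) ^ 2 + (-26 : ℝ) * (deriv u y) ^ 2 * (iteratedDeriv 2 u y) * (iteratedDeriv 4 u y) + (150 : ℝ) * (deriv u y) * (iteratedDeriv 2 u y) ^ 2 * (iteratedDeriv 3 u y) + (-126 : ℝ) * (iteratedDeriv 2 u y) ^ 4) / deriv u y ^ 8) = fun y => ((2 : ℝ) * (deriv u y) ^ 4 * (iteratedDeriv 6 u y) + (-58 : ℝ) * (deriv u y) ^ 3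 * (iteratedDeriv 3 u y) * (iteratedDeriv 4 u y) + (-36 : ℝ) * (deriv u y) ^ 3 * (iteratedDeriv 2 u y) * (iteratedDeriv 5 u y) + (396 : ℝ) * (deriv u y) ^ 2 * (iteratedDeriv 2 u y) * (iteratedDeriv 3 u y) ^ 2 + (306 : ℝ) * (deriv u y) ^ 2 * (iteratedDeriv 2 u y) ^ 2 * (iteratedDeriv 4 u y) + (-1554 : ℝ) * (deriv u y) * (iteratedDeriv 2 u y) ^ 3 * (iteratedDeriv 3 u y) + (1008 : ℝ) * (iteratedDeriv 2 u y) ^ 5) / deriv u y ^ 9 := by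
    funext y
    simp (disch := first | exact hux _ | exact pow_ne_zero _ (hux _) | (fun_prop (disch := first | exact hux _ | exact pow_ne_zero _ (hux _)))) only [deriv_fun_div, deriv_fun_mul, deriv_const_mul, deriv_fun_sub, deriv_fun_add, deriv_fun_pow, deriv_const', hD, hD1, Nat.reduceAdd, Nat.reduceSub]
    try field_simp [hux y]
    try ring1
    all_goals try field_simp [hux y]
    all_goals first
    | ring1
    | (left; ring1)
    | (right; ring1)
    | (rw [div_eq_iff (by simp [hux y])]; ring1)
    | simp
  have hs : sigmaInv u = fun y =>
      iteratedDeriv 3 u y / (deriv u y)^3 - (3/2) * (iteratedDeriv 2 u y)^2 / (deriv u y)^4 := rfl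
  have Esig : deriv (sigmaInv u) = fun y => ((1 : ℝ) * (deriv u y) ^ 2 * (iteratedDeriv 4 u y) + (-6 : ℝ) * (deriv u y) * (iteratedDeriv 2 u y) * (iteratedDeriv 3 u y) + (6 : ℝ) * (iteratedDeriv 2 u y) ^ 3) / deriv u y ^ 5 := by
    rw [hs]
    funext y
    simp (disch := first | exact hux _ | exact pow_ne_zero _ (hux _) | (fun_prop (disch := first | exact hux _ | exact pow_ne_zero _ (hux _)))) only [deriv_fun_div, deriv_fun_mul, deriv_const_mul, deriv_fun_sub, deriv_fun_add, deriv_fun_pow, deriv_const', hD, hD1, Nat.reduceAdd, Nat.reduceSub]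
    try field_simp [hux y]
    try ring1
    all_goals try field_simp [hux y]
    all_goals first
    | ring1
    | (left; ring1)
    | (right; ring1)
    | (rw [div_eq_iff (by simp [hux y])]; ring1)
    | simp
  have S1fun : invD u (sigmaInv u) = fun y => ((1 : ℝ) * (deriv u y) ^ 2 * (iteratedDeriv 4 u y) + (-6 : ℝ) * (deriv u y) * (iteratedDeriv 2 u y) * (iteratedDeriv 3 u y) + (6 : ℝ) * (iteratedDeriv 2 u y) ^ 3) / deriv u y ^ 6 := by
    funext y
    show deriv (sigmaInv u) y / deriv u y = _
    simp only [Esig]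
    try field_simp [hux y]
    try ring1
    all_goals try field_simp [hux y]
    all_goals first
    | ring1
    | (left; ring1)
    | (right; ring1)
    | (rw [div_eq_iff (by simp [hux y])]; ring1)
    | simp
  have Es1 : deriv (fun y => ((1 : ℝ) * (deriv u y) ^ 2 * (iteratedDeriv 4 u y) + (-6 : ℝ) * (deriv u y) * (iteratedDeriv 2 u y) * (iteratedDeriv 3 u y) + (6 : ℝ) * (iteratedDeriv 2 u y) ^ 3) / deriv u y ^ 6) = fun y => ((1 : ℝ) * (deriv u y) ^ 3 * (iteratedDeriv 5 u y) + (-6 : ℝ) * (deriv u y) ^ 2 * (iteratedDeriv 3 u y) ^ 2 + (-10 : ℝ) * (deriv u y) ^ 2 * (iteratedDeriv 2 u y) * (iteratedDeriv 4 u y) + (48 : ℝ) * (deriv u y) * (iteratedDeriv 2 u y) ^ 2 * (iteratedDeriv 3 u y) + (-36 : ℝ) * (iteratedDeriv 2 u y) ^ 4) / deriv u y ^ 7 := by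
    funext y
    simp (disch := first | exact hux _ | exact pow_ne_zero _ (hux _) | (fun_prop (disch := first | exact hux _ | exact pow_ne_zero _ (hux _)))) only [deriv_fun_div, deriv_fun_mul, deriv_const_mul, deriv_fun_sub, deriv_fun_add, deriv_fun_pow, deriv_const', hD, hD1, Nat.reduceAdd, Nat.reduceSub]
    try field_simp [hux y]
    try ring1
    all_goals try field_simp [hux y]
    all_goals first
    | ring1
    | (left; ring1)
    | (right; ring1)
    | (rw [div_eq_iff (by simp [hux y])]; ring1)
    | simp
  have S2fun : invD u (invD u (sigmaInv u)) = fun y => ((1 : ℝ) * (deriv u y) ^ 3 * (iteratedDeriv 5 u y) + (-6 : ℝ) * (deriv u y) ^ 2 * (iteratedDeriv 3 u y) ^ 2 + (-10 : ℝ) * (deriv u y) ^ 2 * (iteratedDeriv 2 u y) * (iteratedDeriv 4 u y) + (48 : ℝ) * (deriv u y) * (iteratedDeriv 2 u y) ^ 2 * (iteratedDeriv 3 u y) + (-36 : ℝ) * (iteratedDeriv 2 u y) ^ 4) / deriv u y ^ 8 := by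
    funext y
    show deriv (invD u (sigmaInv u)) y / deriv u y = _
    rw [S1fun]
    simp only [Es1]
    try field_simp [hux y]
    try ring1
    all_goals try field_simp [hux y]
    all_goals first
    | ring1
    | (left; ring1)
    | (right; ring1)
    | (rw [div_eq_iff (by simp [hux y])]; ring1)
    | simp
  have Es2 : deriv (fun y => ((1 : ℝ) * (deriv u y) ^ 3 * (iteratedDeriv 5 u y) + (-6 : ℝ) * (deriv u y) ^ 2 * (iteratedDeriv 3 u y) ^ 2 + (-10 : ℝ) * (deriv u y) ^ 2 * (iteratedDeriv 2 u y) * (iteratedDeriv 4 u y) + (48 : ℝ) * (deriv u y) * (iteratedDeriv 2 u y) ^ 2 * (iteratedDeriv 3 u y) + (-36 : ℝ) * (iteratedDeriv 2 u y) ^ 4) / deriv u y ^ 8) = fun y => ((1 : ℝ) * (deriv u y) ^ 4 * (iteratedDeriv 6 u y) + (-22 : ℝ) * (deriv u y) ^ 3 * (iteratedDeriv 3 u y) * (iteratedDeriv 4 u y) + (-15 : ℝ) * (deriv u y) ^ 3 * (iteratedDeriv 2 u y) * (iteratedDeriv 5 u y) + (132 : ℝ) * (deriv u y) ^ 2 *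 (iteratedDeriv 2 u y) * (iteratedDeriv 3 u y) ^ 2 + (108 : ℝ) * (deriv u y) ^ 2 * (iteratedDeriv 2 u y) ^ 2 * (iteratedDeriv 4 u y) + (-480 : ℝ) * (deriv u y) * (iteratedDeriv 2 u y) ^ 3 * (iteratedDeriv 3 u y) + (288 : ℝ) * (iteratedDeriv 2 u y) ^ 5) / deriv u y ^ 9 := by
    funext y
    simp (disch := first | exact hux _ | exact pow_ne_zero _ (hux _) | (fun_prop (disch := first | exact hux _ | exact pow_ne_zero _ (hux _)))) only [deriv_fun_div, deriv_fun_mul, deriv_const_mul, deriv_fun_sub, deriv_fun_add, deriv_fun_pow, deriv_const', hD, hD1, Nat.reduceAdd, Nat.reduceSub]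
    try field_simp [hux y]
    try ring1
    all_goals try field_simp [hux y]
    all_goals first
    | ring1
    | (left; ring1)
    | (right; ring1)
    | (rw [div_eq_iff (by simp [hux y])]; ring1)
    | simp
  have S3pt : invD u (invD u (invD u (sigmaInv u))) x = ((1 : ℝ) * (deriv u x) ^ 4 * (iteratedDeriv 6 u x) + (-22 : ℝ) * (deriv u x) ^ 3 * (iteratedDeriv 3 u x) * (iteratedDeriv 4 u x) + (-15 : ℝ) * (deriv u x) ^ 3 * (iteratedDeriv 2 u x) * (iteratedDeriv 5 u x) + (132 : ℝ) * (deriv u x) ^ 2 * (iteratedDeriv 2 u x) * (iteratedDeriv 3 u x) ^ 2 + (108 : ℝ) * (deriv u x) ^ 2 * (iteratedDeriv 2 u x) ^ 2 * (iteratedDeriv 4 u x) + (-480 : ℝ) * (deriv u x) * (iteratedDeriv 2 u x) ^ 3 * (iteratedDeriv 3 u x) + (288 : ℝ) * (iteratedDeriv 2 u x) ^ 5) / deriv u x ^ 10 := by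
    show deriv (invD u (invD u (sigmaInv u))) x / deriv u x = _
    rw [S2fun]
    simp only [Es2]
    try field_simp [hux x]
    try ring1
    all_goals try field_simp [hux x]
    all_goals first
    | ring1
    | (left; ring1)
    | (right; ring1)
    | (rw [div_eq_iff (by simp [hux x])]; ring1)
    | simp
  have RHSeq : - deriv u x *
        (2 * invD u (invD u (invD u (sigmaInv u))) x
          - 6 * sigmaInv u x * invD u (sigmaInv u) x) = ((-2 : ℝ) * (deriv u x) ^ 4 * (iteratedDeriv 6 u x) + (50 : ℝ) * (deriv u x) ^ 3 * (iteratedDeriv 3 u x) * (iteratedDeriv 4 u x) + (30 : ℝ) * (deriv u x) ^ 3 * (iteratedDeriv 2 u x) * (iteratedDeriv 5 u x) + (-300 : ℝ) * (deriv u x) ^ 2 * (iteratedDeriv 2 u x) * (iteratedDeriv 3 u x) ^ 2 + (-225 : ℝ) * (deriv u x) ^ 2 * (iteratedDeriv 2 u x) ^ 2 * (iteratedDeriv 4 u x) + (1050 : ℝ) * (deriv u x) * (iteratedDeriv 2 u x) ^ 3 * (iteratedDeriv 3 u x) + (-630 : ℝ) * (iteratedDeriv 2 u x) ^ 5) / deriv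 u x ^ 9 := by
    have S1pt : invD u (sigmaInv u) x = ((1 : ℝ) * (deriv u x) ^ 2 * (iteratedDeriv 4 u x) + (-6 : ℝ) * (deriv u x) * (iteratedDeriv 2 u x) * (iteratedDeriv 3 u x) + (6 : ℝ) * (iteratedDeriv 2 u x) ^ 3) / deriv u x ^ 6 := by rw [S1fun]
    rw [S3pt, S1pt]
    simp only [hs]
    try field_simp [hux x]
    try ring1
    all_goals try field_simp [hux x]
    all_goals first
    | ring1
    | (left; ring1)
    | (right; ring1)
    | (rw [div_eq_iff (by simp [hux x])]; ring1)
    | simp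
  rw [itd2eq (fun y =>
          -3 * iteratedDeriv 2 u y * (2 * iteratedDeriv 3 u y * deriv u y
            - 3 * (iteratedDeriv 2 u y)^2) / (deriv u y)^7), itd3eq (fun y =>
          (2 * iteratedDeriv 3 u y * deriv u y
            - 3 * (iteratedDeriv 2 u y)^2) / (deriv u y)^6), E11, E21, E22, E31, E32, E33, RHSeq]
  try field_simp [hux x]
  try ring1
  all_goals try field_simp [hux x]
  all_goals first
  | ring1
  | (left; ring1)
  | (right; ring1)
  | (rw [div_eq_iff (by simp [hux x])]; ring1)
  | simp
end
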